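/- arXiv:math/0005279 — 4 statements merged into one kernel-verified Lean document; each statement's English description precedes it below -/
import Mathlib

section
/- For every dimension d ≥ 1 and every integer n ≥ 0 there exists a constant A_n < ∞ (depending only on n and d) such that for all δ > 0, all y ∈ ℝ^d and all x ∈ ℝ^d, the n-th total derivative of the weight function φ_{δ,y} satisfies ‖∇ⁿφ_{δ,y}(x)‖ ≤ A_n δⁿ φ_{δ,y}(x). -/
/-!
Write `φ_{δ,y}(x) = Φ(δ • (x - y))` with `Φ z = exp (-⟨z⟩)` and `⟨z⟩ = √(1 + ‖z‖²)`; the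
rescaling contributes exactly the factor `δⁿ`, so it suffices to bound `‖∇ⁿΦ‖ ≤ Aₙ Φ`.
By Faà di Bruno this follows once every derivative `∇ⁱ⟨·⟩`, `i ≥ 1`, is bounded uniformly.
Near a point `z`, write `⟨x⟩ = ⟨z⟩ · √((1 + ‖x‖²) / ⟨z⟩²)`: the inner function takes the value `1`
at `z` and its `j`-th derivative there is at most `(2 / ⟨z⟩)ʲ`, while the derivatives of `√` at `1`
are at most factorials, so the powers of `⟨z⟩` cancel.
-/

/-- The weight function `φ_{δ,y}(x) = exp(−√(1+δ²|x−y|²))` on `ℝ^d`. -/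
noncomputable def phi (d : ℕ) (δ : ℝ) (y x : EuclideanSpace ℝ (Fin d)) : ℝ :=
  Real.exp (-Real.sqrt (1 + δ ^ 2 * ‖x - y‖ ^ 2))

open Nat Set

theorem abs_descPochhammer_eval_le {a : ℝ} (ha : |a| ≤ 1) (k : ℕ) :
    |(descPochhammer ℝ k).eval a| ≤ k ! := by
  induction k with
  | zero => simp
  | succ k ih =>
    rw [descPochhammer_succ_right, Polynomial.eval_mul, abs_mul, Nat.factorial_succ,
      Nat.cast_mul, mul_comm ((k + 1 : ℕ) : ℝ)]
    gcongr
    simp only [Polynomial.eval_sub, Polynomial.eval_X, Polynomial.eval_natCast, Nat.cast_succ]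
    exact (abs_sub _ _).trans (by rw [Nat.abs_cast]; linarith)

theorem abs_iteratedDeriv_rpow_const_one_le {a : ℝ} (ha : |a| ≤ 1) (k : ℕ) :
    |iteratedDeriv k (fun u : ℝ => u ^ a) 1| ≤ k ! := by
  rw [iteratedDeriv_eq_iterate, Real.iter_deriv_rpow_const, Real.one_rpow, mul_one]
  exact abs_descPochhammer_eval_le ha k

theorem norm_iteratedFDeriv_comp_smul_sub {𝕜 E G : Type*} [NontriviallyNormedField 𝕜]
    [NormedAddCommGroup E] [NormedSpace 𝕜 E] [NormedAddCommGroup G] [NormedSpace 𝕜 G]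
    {f : E → G} {n : ℕ} (hf : ContDiff 𝕜 n f) (c : 𝕜) (y x : E) :
    ‖iteratedFDeriv 𝕜 n (fun x => f (c • (x - y))) x‖
      = ‖c‖ ^ n * ‖iteratedFDeriv 𝕜 n f (c • (x - y))‖ := by
  rw [iteratedFDeriv_comp_sub (f := fun z => f (c • z)), iteratedFDeriv_comp_const_smul c hf,
    norm_smul, norm_pow]

theorem norm_iteratedFDeriv_exp_comp_le {E : Type*} [NormedAddCommGroup E] [NormedSpace ℝ E]
    {f : E → ℝ} {n : ℕ} (hf : ContDiff ℝ n f) (x : E) {C : ℝ} (hC : 1 ≤ C)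
    (hD : ∀ i, 1 ≤ i → i ≤ n → ‖iteratedFDeriv ℝ i f x‖ ≤ C) :
    ‖iteratedFDeriv ℝ n (fun x => Real.exp (f x)) x‖ ≤ n ! * C ^ n * Real.exp (f x) := by
  have hexp : ∀ k, k ≤ n → ‖iteratedFDeriv ℝ k Real.exp (f x)‖ ≤ Real.exp (f x) := fun k _ => by
    rw [norm_iteratedFDeriv_eq_norm_iteratedDeriv, iteratedDeriv_eq_iterate, Real.iter_deriv_exp,
      Real.norm_of_nonneg (Real.exp_pos _).le]
  have hpow : ∀ i, 1 ≤ i → i ≤ n → ‖iteratedFDeriv ℝ i f x‖ ≤ C ^ i := fun i hi hin =>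
    (hD i hi hin).trans (le_self_pow₀ hC (by omega))
  calc ‖iteratedFDeriv ℝ n (Real.exp ∘ f) x‖ ≤ n ! * Real.exp (f x) * C ^ n :=
        norm_iteratedFDeriv_comp_le (Real.contDiff_exp.of_le le_top) hf le_rfl x hexp hpow
    _ = n ! * C ^ n * Real.exp (f x) := by ring

section InnerProductSpace

variable {F : Type*} [NormedAddCommGroup F] [InnerProductSpace ℝ F]

theorem fderiv_one_add_norm_sq :
    fderiv ℝ (fun x : F => 1 + ‖x‖ ^ 2) = ⇑((2 : ℝ) • innerSL ℝ (E := F)) := by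
  ext1 x
  rw [fderiv_const_add, fderiv_norm_sq_apply, smul_apply, two_smul, two_smul]

theorem norm_iteratedFDeriv_one_add_norm_sq_le (z : F) {j : ℕ} (hj : 1 ≤ j) :
    ‖iteratedFDeriv ℝ j (fun x : F => 1 + ‖x‖ ^ 2) z‖
      ≤ (1 + ‖z‖ ^ 2) * (2 / √(1 + ‖z‖ ^ 2)) ^ j := by
  set L := (2 : ℝ) • innerSL ℝ (E := F) with hL_def
  have hL : ‖L‖ ≤ 2 := by
    grw [hL_def, ContinuousLinearMap.opNorm_smul_le, norm_innerSL_le]; norm_num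
  have hL' : fderiv ℝ L = fun _ => L := funext fun _ => L.fderiv
  set s := √(1 + ‖z‖ ^ 2)
  have hs : s ^ 2 = 1 + ‖z‖ ^ 2 := Real.sq_sqrt (by positivity)
  have hs_pos : 0 < s := Real.sqrt_pos.2 (by positivity)
  have hzs : ‖z‖ ≤ s := Real.le_sqrt_of_sq_le (by linarith)
  rw [← hs]
  clear_value s
  obtain _ | _ | _ | k := j
  · omega
  · rw [norm_iteratedFDeriv_one, fderiv_one_add_norm_sq]
    calc ‖L z‖ ≤ 2 * s := by grw [L.le_opNorm, hL, hzs]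
      _ = s ^ 2 * (2 / s) ^ (0 + 1) := by simp only [zero_add]; field_simp
  · rw [← norm_iteratedFDeriv_fderiv, norm_iteratedFDeriv_one, fderiv_one_add_norm_sq, hL']
    calc ‖L‖ ≤ 4 := by linarith
      _ = s ^ 2 * (2 / s) ^ (0 + 1 + 1) := by norm_num [div_pow]; field_simp
  · rw [← norm_iteratedFDeriv_fderiv, ← norm_iteratedFDeriv_fderiv, fderiv_one_add_norm_sq, hL',
      iteratedFDeriv_const_of_ne k.succ_ne_zero, Pi.zero_apply, norm_zero]
    positivity

theorem contDiff_sqrt_one_add_norm_sq {n : WithTop ℕ∞} :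
    ContDiff ℝ n (fun x : F => √(1 + ‖x‖ ^ 2)) :=
  (contDiff_const.add (contDiff_norm_sq ℝ)).sqrt fun _ => by positivity

theorem norm_iteratedFDeriv_sqrt_one_add_norm_sq_le (z : F) {i : ℕ} (hi : 1 ≤ i) :
    ‖iteratedFDeriv ℝ i (fun x : F => √(1 + ‖x‖ ^ 2)) z‖ ≤ (i ! : ℝ) ^ 2 * 2 ^ i := by
  set r := 1 + ‖z‖ ^ 2
  have hr : 0 < r := by positivity
  set s := √r
  have hs : 1 ≤ s := Real.one_le_sqrt.2 (le_add_of_nonneg_right (by positivity))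
  set q : F → ℝ := fun x => 1 + ‖x‖ ^ 2
  set p : F → ℝ := r⁻¹ • q
  set g : ℝ → ℝ := fun u => s * u ^ (1 / 2 : ℝ)
  have hcomp : (fun x : F => √(1 + ‖x‖ ^ 2)) = g ∘ p := by
    ext x
    simp only [Function.comp_apply, g, p, q, Pi.smul_apply, smul_eq_mul, s]
    rw [← Real.sqrt_eq_rpow, ← Real.sqrt_mul hr.le, mul_inv_cancel_left₀ hr.ne']
  have hq : ContDiff ℝ i q := contDiff_const.add (contDiff_norm_sq ℝ)
  have hg : ContDiffOn ℝ i g (Ioi 0) := fun u hu =>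
    (contDiffAt_const.mul (Real.contDiffAt_rpow_const (Or.inl (ne_of_gt hu)))).contDiffWithinAt
  have hrange : range p ⊆ Ioi 0 := by
    rintro _ ⟨x, rfl⟩
    simp only [p, q, Pi.smul_apply, smul_eq_mul, mem_Ioi]
    positivity
  have hpz : p z = 1 := by simp [p, q, r, hr.ne']
  have hC : ∀ k ≤ i, ‖iteratedFDerivWithin ℝ k g (Ioi 0) (p z)‖ ≤ s * i ! := by
    intro k hk
    rw [hpz, iteratedFDerivWithin_of_isOpen k isOpen_Ioi (mem_Ioi.2 one_pos),
      norm_iteratedFDeriv_eq_norm_iteratedDeriv, iteratedDeriv_const_mul, norm_mul,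
      Real.norm_of_nonneg (by positivity), Real.norm_eq_abs]
    · grw [abs_iteratedDeriv_rpow_const_one_le (by norm_num) k, Nat.factorial_le hk]
    · exact Real.contDiffAt_rpow_const (Or.inl one_ne_zero)
  have hD : ∀ j, 1 ≤ j → j ≤ i → ‖iteratedFDeriv ℝ j p z‖ ≤ (2 / s) ^ j := by
    intro j hj hji
    rw [iteratedFDeriv_const_smul_apply (hq.contDiffAt.of_le (by exact_mod_cast hji)), norm_smul,
      norm_inv, Real.norm_of_nonneg hr.le, inv_mul_le_iff₀ hr]
    exact norm_iteratedFDeriv_one_add_norm_sq_le z hj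
  rw [hcomp]
  calc ‖iteratedFDeriv ℝ i (g ∘ p) z‖ ≤ i ! * (s * i !) * (2 / s) ^ i :=
        norm_iteratedFDeriv_comp_le' hrange (uniqueDiffOn_Ioi 0) hg (hq.const_smul r⁻¹) le_rfl z
          hC hD
    _ = (i ! : ℝ) ^ 2 * 2 ^ i * (s / s ^ i) := by ring
    _ ≤ (i ! : ℝ) ^ 2 * 2 ^ i := by
      grw [div_le_one_of_le₀ (le_self_pow₀ hs (by omega)) (by positivity), mul_one]

theorem norm_iteratedFDeriv_exp_neg_sqrt_one_add_norm_sq_le (n : ℕ) (z : F) :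
    ‖iteratedFDeriv ℝ n (fun x : F => Real.exp (-√(1 + ‖x‖ ^ 2))) z‖
      ≤ n ! * ((n ! : ℝ) ^ 2 * 2 ^ n) ^ n * Real.exp (-√(1 + ‖z‖ ^ 2)) := by
  refine norm_iteratedFDeriv_exp_comp_le contDiff_sqrt_one_add_norm_sq.neg z
    (one_le_mul_of_one_le_of_one_le (one_le_pow₀ (mod_cast n.factorial_pos))
      (one_le_pow₀ one_le_two)) fun i hi hin => ?_
  rw [← Pi.neg_def, iteratedFDeriv_neg_apply, norm_neg]
  grw [norm_iteratedFDeriv_sqrt_one_add_norm_sq_le z hi, Nat.factorial_le hin,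
    pow_le_pow_right₀ one_le_two hin]

end InnerProductSpace

theorem weight_iteratedFDeriv_bound_general (d : ℕ) (n : ℕ) :
    ∃ A : ℝ, ∀ δ : ℝ, 0 < δ → ∀ y x : EuclideanSpace ℝ (Fin d),
      ‖iteratedFDeriv ℝ n (phi d δ y) x‖ ≤ A * δ ^ n * phi d δ y x := by
  refine ⟨n ! * ((n ! : ℝ) ^ 2 * 2 ^ n) ^ n, fun δ hδ y x => ?_⟩
  have hphi : phi d δ y = fun x => Real.exp (-√(1 + ‖δ • (x - y)‖ ^ 2)) := by
    ext x
    rw [phi, norm_smul, mul_pow, Real.norm_eq_abs, sq_abs]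
  rw [hphi, norm_iteratedFDeriv_comp_smul_sub (f := fun z => Real.exp (-√(1 + ‖z‖ ^ 2)))
      (Real.contDiff_exp.comp contDiff_sqrt_one_add_norm_sq.neg) δ y x, Real.norm_of_nonneg hδ.le]
  grw [norm_iteratedFDeriv_exp_neg_sqrt_one_add_norm_sq_le]
  exact le_of_eq (by ring)

/-- For every dimension `d ≥ 1` and every `n` there is a constant `A_n < ∞` such that
`‖∇ⁿφ_{δ,y}(x)‖ ≤ A_n δⁿ φ_{δ,y}(x)` for all `δ > 0`, `y`, `x`. -/
theorem weight_iteratedFDeriv_bound (d : ℕ) (hd : 1 ≤ d) (n : ℕ) :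
    ∃ A : ℝ, ∀ δ : ℝ, 0 < δ → ∀ y x : EuclideanSpace ℝ (Fin d),
      ‖iteratedFDeriv ℝ n (phi d δ y) x‖ ≤ A * δ ^ n * phi d δ y x :=
  weight_iteratedFDeriv_bound_general d n
end

section
/- Let α ∈ ℝ and let m ≥ 0 be an integer. There exists δ₀ > 0 (depending only on α) such that for every δ ∈ (0, δ₀], every y ∈ ℝ, and every smooth function f : ℝ → ℂ all of whose derivatives are bounded, one has Re ∫_ℝ φ_{δ,y}(x) · conj(f^{(m)}(x)) · [(1+iα) f^{(m+2)}(x) + f^{(m)}(x)] dx ≤ −(1/2) ∫_ℝ φ_{δ,y}(x) |f^{(m+1)}(x)|² dx + (1 + (1+α²)/2) ∫_ℝ φ_{δ,y}(x) |f^{(m)}(x)|² dx. -/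
open Complex MeasureTheory Filter

/-- The weight function `φ_{δ,y}(x) = exp(−√(1+δ²|x−y|²))` on `ℝ`. -/
noncomputable def phi1 (δ y x : ℝ) : ℝ :=
  Real.exp (-Real.sqrt (1 + δ ^ 2 * |x - y| ^ 2))

lemma phi1_eq (δ y x : ℝ) : phi1 δ y x = Real.exp (-Real.sqrt (1 + δ ^ 2 * (x - y) ^ 2)) := by
  rw [phi1, _root_.sq_abs]

lemma phi1_pos (δ y x : ℝ) : 0 < phi1 δ y x := Real.exp_pos _

lemma hasDerivAt_phi1 (δ y x : ℝ) :
    HasDerivAt (phi1 δ y)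
      (-(δ ^ 2 * (x - y) / Real.sqrt (1 + δ ^ 2 * (x - y) ^ 2)) * phi1 δ y x) x := by
  have hq : (0:ℝ) < 1 + δ ^ 2 * (x - y) ^ 2 := by positivity
  have h1 : HasDerivAt (fun t : ℝ => 1 + δ ^ 2 * (t - y) ^ 2) (δ ^ 2 * (2 * (x - y))) x := by
    have h0 : HasDerivAt (fun t : ℝ => (t - y) ^ 2) (2 * (x - y)) x := by
      simpa [Function.comp_def] using (hasDerivAt_pow 2 (x - y)).comp x ((hasDerivAt_id x).sub_const y)
    simpa using (h0.const_mul (δ ^ 2)).const_add 1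
  have h2 : HasDerivAt (fun t : ℝ => Real.sqrt (1 + δ ^ 2 * (t - y) ^ 2))
      (1 / (2 * Real.sqrt (1 + δ ^ 2 * (x - y) ^ 2)) * (δ ^ 2 * (2 * (x - y)))) x :=
    (Real.hasDerivAt_sqrt hq.ne').comp x h1
  have h3 := (h2.neg).exp
  have hs : Real.sqrt (1 + δ ^ 2 * (x - y) ^ 2) ≠ 0 := (Real.sqrt_pos.2 hq).ne'
  have : HasDerivAt (phi1 δ y)
      (Real.exp (-Real.sqrt (1 + δ ^ 2 * (x - y) ^ 2)) *
        (-(1 / (2 * Real.sqrt (1 + δ ^ 2 * (x - y) ^ 2)) * (δ ^ 2 * (2 * (x - y)))))) x := by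
    have hfun : phi1 δ y = fun t => Real.exp (-Real.sqrt (1 + δ ^ 2 * (t - y) ^ 2)) := by
      funext t; exact phi1_eq δ y t
    rw [hfun]; exact h3
  convert this using 1
  rw [phi1_eq]
  field_simp

lemma abs_psi_le (δ y x : ℝ) (hδ : 0 < δ) :
    |(-(δ ^ 2 * (x - y) / Real.sqrt (1 + δ ^ 2 * (x - y) ^ 2)))| ≤ δ := by
  have hq : (0:ℝ) < 1 + δ ^ 2 * (x - y) ^ 2 := by positivity
  have hs : 0 < Real.sqrt (1 + δ ^ 2 * (x - y) ^ 2) := Real.sqrt_pos.2 hq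
  have hs2 : Real.sqrt (1 + δ ^ 2 * (x - y) ^ 2) ^ 2 = 1 + δ ^ 2 * (x - y) ^ 2 :=
    Real.sq_sqrt hq.le
  rw [abs_neg, abs_div, abs_of_pos hs, div_le_iff₀ hs]
  have h1 : |δ ^ 2 * (x - y)| = δ * (δ * |x - y|) := by
    rw [abs_mul, abs_of_pos (by positivity : (0:ℝ) < δ ^ 2)]; ring
  rw [h1]
  have h2 : δ * |x - y| ≤ Real.sqrt (1 + δ ^ 2 * (x - y) ^ 2) := by
    nlinarith [abs_nonneg (x - y), _root_.sq_abs (x - y), hs, hs2]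
  nlinarith [hδ]

lemma integrable_phi1 {δ : ℝ} (hδ : 0 < δ) (y : ℝ) : Integrable (phi1 δ y) := by
  have hint : Integrable fun x : ℝ => 4 * (1 + (δ * (x - y)) ^ 2)⁻¹ := by
    have h1 : Integrable fun x : ℝ => (1 + (δ * x) ^ 2)⁻¹ :=
      (integrable_comp_mul_left_iff (fun x : ℝ => (1 + x ^ 2)⁻¹) hδ.ne').2
        integrable_inv_one_add_sq
    exact (h1.comp_sub_right y).const_mul 4
  refine hint.mono' ?_ (Filter.Eventually.of_forall fun x => ?_)
  · exact ((Real.continuous_exp.comp (by fun_prop)).aestronglyMeasurable)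
  · rw [Real.norm_eq_abs, abs_of_pos (phi1_pos δ y x), phi1_eq]
    have hq : (0:ℝ) < 1 + δ ^ 2 * (x - y) ^ 2 := by positivity
    have hteq : 1 + (δ * (x - y)) ^ 2 = 1 + δ ^ 2 * (x - y) ^ 2 := by ring
    rw [hteq]
    set s := Real.sqrt (1 + δ ^ 2 * (x - y) ^ 2) with hsdef
    have hs0 : 0 ≤ s := Real.sqrt_nonneg _
    have hs2 : s ^ 2 = 1 + δ ^ 2 * (x - y) ^ 2 := Real.sq_sqrt hq.le
    have hexp : (1 + s / 2) ^ 2 ≤ Real.exp s := by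
      have h2 : Real.exp s = Real.exp (s / 2) ^ 2 := by
        rw [← Real.exp_nat_mul]; norm_num; ring_nf
      rw [h2]
      nlinarith [Real.add_one_le_exp (s / 2), hs0]
    have ht4 : 1 + δ ^ 2 * (x - y) ^ 2 ≤ 4 * Real.exp s := by
      nlinarith [hexp, hs2, hs0]
    rw [Real.exp_neg]
    calc (Real.exp s)⁻¹ ≤ ((1 + δ ^ 2 * (x - y) ^ 2) / 4)⁻¹ := by
          apply inv_anti₀ (by positivity) (by linarith)
      _ = 4 * (1 + δ ^ 2 * (x - y) ^ 2)⁻¹ := by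
          rw [inv_div]; ring

lemma integrable_phi1_mulC {δ : ℝ} (hδ : 0 < δ) (y : ℝ) {h : ℝ → ℂ}
    (hc : AEStronglyMeasurable h volume) {C : ℝ} (hC : ∀ x, ‖h x‖ ≤ C) :
    Integrable fun x => (phi1 δ y x : ℂ) * h x := by
  have := ((integrable_phi1 hδ y).ofReal (𝕜 := ℂ)).bdd_mul hc (Eventually.of_forall hC)
  simpa [mul_comm] using this

lemma integrable_phi1_mulR {δ : ℝ} (hδ : 0 < δ) (y : ℝ) {h : ℝ → ℝ}
    (hc : AEStronglyMeasurable h volume) {C : ℝ} (hC : ∀ x, |h x| ≤ C) :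
    Integrable fun x => phi1 δ y x * h x := by
  have := (integrable_phi1 hδ y).bdd_mul hc (Eventually.of_forall fun x => by simpa using hC x)
  simpa [mul_comm] using this

/-- Dissipativity of `ℒ = (1+iα)Δ + 1` in the weighted space `L²_loc(δ,y)`:
for `δ` small enough (depending only on `α`) and every smooth `f : ℝ → ℂ` with all
derivatives bounded,
`Re ∫ φ_{δ,y} conj(f^{(m)}) ((1+iα) f^{(m+2)} + f^{(m)})
  ≤ −(1/2) ∫ φ_{δ,y} |f^{(m+1)}|² + (1+(1+α²)/2) ∫ φ_{δ,y} |f^{(m)}|²`. -/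
theorem dissipativity_weighted (α : ℝ) (m : ℕ) :
    ∃ δ₀ : ℝ, 0 < δ₀ ∧ ∀ δ : ℝ, 0 < δ → δ ≤ δ₀ → ∀ y : ℝ, ∀ f : ℝ → ℂ,
      ContDiff ℝ (⊤ : ℕ∞) f → (∀ n : ℕ, ∃ C : ℝ, ∀ x : ℝ, ‖iteratedDeriv n f x‖ ≤ C) →
      (∫ x : ℝ, (phi1 δ y x : ℂ) * ((starRingEnd ℂ) (iteratedDeriv m f x) *
          ((1 + Complex.I * (α : ℂ)) * iteratedDeriv (m + 2) f x + iteratedDeriv m f x))).re ≤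
        -(1 / 2) * (∫ x : ℝ, phi1 δ y x * ‖iteratedDeriv (m + 1) f x‖ ^ 2) +
          (1 + (1 + α ^ 2) / 2) * (∫ x : ℝ, phi1 δ y x * ‖iteratedDeriv m f x‖ ^ 2) := by
  refine ⟨(1 + |α|)⁻¹, by positivity, fun δ hδ hδ₀ y f hf hbd => ?_⟩
  obtain ⟨C0, hC0⟩ := hbd m
  obtain ⟨C1, hC1⟩ := hbd (m + 1)
  obtain ⟨C2, hC2⟩ := hbd (m + 2)
  have hC0' : 0 ≤ C0 := le_trans (norm_nonneg _) (hC0 0)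
  have hC1' : 0 ≤ C1 := le_trans (norm_nonneg _) (hC1 0)
  set g : ℝ → ℂ := iteratedDeriv m f with hg
  set g1 : ℝ → ℂ := iteratedDeriv (m + 1) f with hg1
  set g2 : ℝ → ℂ := iteratedDeriv (m + 2) f with hg2
  set φ : ℝ → ℝ := phi1 δ y with hφ
  set ψ : ℝ → ℝ := fun x => -(δ ^ 2 * (x - y) / Real.sqrt (1 + δ ^ 2 * (x - y) ^ 2)) with hψ
  have hφpos : ∀ x, 0 < φ x := fun x => phi1_pos δ y x
  have hgc : Continuous g := hf.continuous_iteratedDeriv m (by exact_mod_cast le_top)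
  have hg1c : Continuous g1 := hf.continuous_iteratedDeriv (m + 1) (by exact_mod_cast le_top)
  have hg2c : Continuous g2 := hf.continuous_iteratedDeriv (m + 2) (WithTop.coe_le_coe.2 (le_top (a := ((m + 2 : ℕ) : ℕ∞))))
  have hψle : ∀ x, |ψ x| ≤ δ := fun x => abs_psi_le δ y x hδ
  have hψc : Continuous ψ := by
    apply Continuous.neg
    apply Continuous.div (by fun_prop) (by fun_prop)
    intro x
    exact (Real.sqrt_pos.2 (by positivity)).ne'
  have hD : ∀ x, HasDerivAt g (g1 x) x := by
    intro x
    have hd := (hf.differentiable_iteratedDeriv m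
      (by exact_mod_cast ENat.coe_lt_top m)).differentiableAt (x := x)
    have := hd.hasDerivAt
    rw [hg1, iteratedDeriv_succ]
    exact this
  have hD1 : ∀ x, HasDerivAt g1 (g2 x) x := by
    intro x
    have hd := (hf.differentiable_iteratedDeriv (m + 1)
      (by exact_mod_cast ENat.coe_lt_top (m + 1))).differentiableAt (x := x)
    have := hd.hasDerivAt
    rw [hg2, iteratedDeriv_succ]
    exact this
  -- real integrals
  set r0 : ℝ := ∫ x : ℝ, φ x * ‖g x‖ ^ 2 with hr0def
  set r1 : ℝ := ∫ x : ℝ, φ x * ‖g1 x‖ ^ 2 with hr1def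
  have hInt0 : Integrable fun x => φ x * ‖g x‖ ^ 2 :=
    integrable_phi1_mulR hδ y ((hgc.norm.pow 2).aestronglyMeasurable) (C := C0 ^ 2)
      (fun x => by rw [_root_.abs_of_nonneg (by positivity)]
                   exact pow_le_pow_left₀ (norm_nonneg _) (hC0 x) 2)
  have hInt1 : Integrable fun x => φ x * ‖g1 x‖ ^ 2 :=
    integrable_phi1_mulR hδ y ((hg1c.norm.pow 2).aestronglyMeasurable) (C := C1 ^ 2)
      (fun x => by rw [_root_.abs_of_nonneg (by positivity)]
                   exact pow_le_pow_left₀ (norm_nonneg _) (hC1 x) 2)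
  have hr0nn : 0 ≤ r0 := integral_nonneg fun x => mul_nonneg (hφpos x).le (by positivity)
  have hr1nn : 0 ≤ r1 := integral_nonneg fun x => mul_nonneg (hφpos x).le (by positivity)
  have hmc : ∀ (a b : ℝ → ℂ), Continuous a → Continuous b →
      AEStronglyMeasurable (fun x => (starRingEnd ℂ) (a x) * b x) volume := by
    intro a b ha hb
    have : Continuous fun x => (starRingEnd ℂ) (a x) * b x := by
      simp only [starRingEnd_apply]
      exact ha.star.mul hb
    exact this.aestronglyMeasurable
  -- complex integrabilities
  have hA1 : Integrable fun x => (φ x : ℂ) * ((starRingEnd ℂ) (g x) * g2 x) :=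
    integrable_phi1_mulC hδ y (hmc g g2 hgc hg2c) (C := C0 * C2) (fun x => by
      rw [norm_mul, RCLike.norm_conj]
      exact mul_le_mul (hC0 x) (hC2 x) (norm_nonneg _) hC0')
  have hA3 : Integrable fun x => (φ x : ℂ) * ((starRingEnd ℂ) (g1 x) * g1 x) :=
    integrable_phi1_mulC hδ y (hmc g1 g1 hg1c hg1c) (C := C1 * C1) (fun x => by
      rw [norm_mul, RCLike.norm_conj]
      exact mul_le_mul (hC1 x) (hC1 x) (norm_nonneg _) hC1')
  have hA4 : Integrable fun x => (φ x : ℂ) * ((starRingEnd ℂ) (g x) * g x) :=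
    integrable_phi1_mulC hδ y (hmc g g hgc hgc) (C := C0 * C0) (fun x => by
      rw [norm_mul, RCLike.norm_conj]
      exact mul_le_mul (hC0 x) (hC0 x) (norm_nonneg _) hC0')
  have hA2 : Integrable fun x => (φ x : ℂ) * ((starRingEnd ℂ) (g x) * g1 x) :=
    integrable_phi1_mulC hδ y (hmc g g1 hgc hg1c) (C := C0 * C1) (fun x => by
      rw [norm_mul, RCLike.norm_conj]
      exact mul_le_mul (hC0 x) (hC1 x) (norm_nonneg _) hC0')
  have hB1 : Integrable fun x => ((ψ x * φ x : ℝ) : ℂ) * ((starRingEnd ℂ) (g x) * g1 x) := by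
    have h := integrable_phi1_mulC hδ y
      (h := fun x => (ψ x : ℂ) * ((starRingEnd ℂ) (g x) * g1 x))
      ((Complex.continuous_ofReal.comp hψc).aestronglyMeasurable.mul (hmc g g1 hgc hg1c))
      (C := δ * (C0 * C1)) (fun x => by
        rw [norm_mul, norm_mul, RCLike.norm_conj, Complex.norm_real]
        refine mul_le_mul (hψle x) (mul_le_mul (hC0 x) (hC1 x) (norm_nonneg _) hC0')
          (by positivity) hδ.le)
    refine h.congr (Eventually.of_forall fun x => ?_)
    push_cast
    ring
  -- integration by parts
  have hu : ∀ x, HasDerivAt (fun t => (φ t : ℂ) * (starRingEnd ℂ) (g t))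
      (((ψ x * φ x : ℝ) : ℂ) * (starRingEnd ℂ) (g x) + (φ x : ℂ) * (starRingEnd ℂ) (g1 x)) x := by
    intro x
    have h1 : HasDerivAt (fun t => ((φ t : ℝ) : ℂ)) (((ψ x * φ x : ℝ) : ℂ)) x :=
      (hasDerivAt_phi1 δ y x).ofReal_comp
    have h2 := (hD x).star
    have h3 := h1.mul h2
    simp only [← starRingEnd_apply] at h3
    exact h3
  have ibp := integral_mul_deriv_eq_deriv_mul_of_integrable (fun x _ => hu x) (fun x _ => hD1 x)
    (hA1.congr (Eventually.of_forall fun x => by simp only [Pi.mul_apply]; ring))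
    ((hB1.add hA3).congr (Eventually.of_forall fun x => by
      simp only [Pi.mul_apply, Pi.add_apply]; ring))
    (hA2.congr (Eventually.of_forall fun x => by simp only [Pi.mul_apply]; ring))
  -- conj z * z = ‖z‖²
  have hconj : ∀ z : ℂ, (starRingEnd ℂ) z * z = ((‖z‖ ^ 2 : ℝ) : ℂ) := fun z => by
    rw [mul_comm, Complex.mul_conj]
    norm_cast
    rw [Complex.normSq_eq_norm_sq]
  set B : ℂ := ∫ x : ℝ, ((ψ x * φ x : ℝ) : ℂ) * ((starRingEnd ℂ) (g x) * g1 x) with hBdef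
  have hr1C : (∫ x : ℝ, (φ x : ℂ) * ((starRingEnd ℂ) (g1 x) * g1 x)) = (r1 : ℂ) := by
    have e : ∀ x : ℝ, (φ x : ℂ) * ((starRingEnd ℂ) (g1 x) * g1 x)
        = ((φ x * ‖g1 x‖ ^ 2 : ℝ) : ℂ) := fun x => by rw [hconj]; push_cast; ring
    simp_rw [e]
    exact integral_ofReal
  have hr0C : (∫ x : ℝ, (φ x : ℂ) * ((starRingEnd ℂ) (g x) * g x)) = (r0 : ℂ) := by
    have e : ∀ x : ℝ, (φ x : ℂ) * ((starRingEnd ℂ) (g x) * g x)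
        = ((φ x * ‖g x‖ ^ 2 : ℝ) : ℂ) := fun x => by rw [hconj]; push_cast; ring
    simp_rw [e]
    exact integral_ofReal
  have hJ : (∫ x : ℝ, (φ x : ℂ) * ((starRingEnd ℂ) (g x) * g2 x)) = -B - (r1 : ℂ) := by
    have e1 : (∫ x : ℝ, (φ x : ℂ) * ((starRingEnd ℂ) (g x) * g2 x))
        = ∫ x : ℝ, ((φ x : ℂ) * (starRingEnd ℂ) (g x)) * g2 x := by
      congr 1; funext x; ring
    rw [e1, ibp]
    have e3 : ∀ x : ℝ, (((ψ x * φ x : ℝ) : ℂ) * (starRingEnd ℂ) (g x)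
          + (φ x : ℂ) * (starRingEnd ℂ) (g1 x)) * g1 x
        = ((ψ x * φ x : ℝ) : ℂ) * ((starRingEnd ℂ) (g x) * g1 x)
          + (φ x : ℂ) * ((starRingEnd ℂ) (g1 x) * g1 x) := fun x => by ring
    simp_rw [e3]
    rw [integral_add hB1 hA3, hr1C]
    ring
  have hmain : (∫ x : ℝ, (φ x : ℂ) * ((starRingEnd ℂ) (g x)
        * ((1 + Complex.I * (α : ℂ)) * g2 x + g x)))
      = (1 + Complex.I * (α : ℂ)) * (-B - (r1 : ℂ)) + (r0 : ℂ) := by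
    have e : ∀ x : ℝ, (φ x : ℂ) * ((starRingEnd ℂ) (g x)
          * ((1 + Complex.I * (α : ℂ)) * g2 x + g x))
        = (1 + Complex.I * (α : ℂ)) * ((φ x : ℂ) * ((starRingEnd ℂ) (g x) * g2 x))
          + (φ x : ℂ) * ((starRingEnd ℂ) (g x) * g x) := fun x => by ring
    simp_rw [e]
    rw [integral_add (hA1.const_mul _) hA4, integral_const_mul, hJ, hr0C]
  have hre : (∫ x : ℝ, (φ x : ℂ) * ((starRingEnd ℂ) (g x)
        * ((1 + Complex.I * (α : ℂ)) * g2 x + g x))).re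
      = r0 - r1 - ((1 + Complex.I * (α : ℂ)) * B).re := by
    rw [hmain]
    have e : (1 + Complex.I * (α : ℂ)) * (-B - (r1 : ℂ)) + (r0 : ℂ)
        = -((1 + Complex.I * (α : ℂ)) * B) - (1 + Complex.I * (α : ℂ)) * (r1 : ℂ) + (r0 : ℂ) := by
      ring
    rw [e]
    simp [Complex.add_re, Complex.sub_re, Complex.neg_re, Complex.mul_re]
    ring
  -- bound on B
  have hBnorm : ‖B‖ ≤ δ * (1 / 2 * r0 + 1 / 2 * r1) := by
    have h1 : ‖B‖ ≤ ∫ x : ℝ, ‖((ψ x * φ x : ℝ) : ℂ) * ((starRingEnd ℂ) (g x) * g1 x)‖ :=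
      norm_integral_le_integral_norm _
    have h2 : (∫ x : ℝ, ‖((ψ x * φ x : ℝ) : ℂ) * ((starRingEnd ℂ) (g x) * g1 x)‖)
        ≤ ∫ x : ℝ, δ * (1 / 2 * (φ x * ‖g x‖ ^ 2) + 1 / 2 * (φ x * ‖g1 x‖ ^ 2)) := by
      refine integral_mono_of_nonneg (Eventually.of_forall fun x => norm_nonneg _)
        (((hInt0.const_mul (1 / 2)).add (hInt1.const_mul (1 / 2))).const_mul δ)
        (Eventually.of_forall fun x => ?_)
      have e : ‖((ψ x * φ x : ℝ) : ℂ) * ((starRingEnd ℂ) (g x) * g1 x)‖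
          = |ψ x| * φ x * (‖g x‖ * ‖g1 x‖) := by
        simp only [norm_mul, Complex.norm_real, RCLike.norm_conj, Real.norm_eq_abs,
          abs_mul, _root_.abs_of_pos (hφpos x)]
      dsimp only
      rw [e]
      nlinarith [mul_nonneg (mul_nonneg (sub_nonneg.2 (hψle x)) (hφpos x).le)
          (mul_nonneg (norm_nonneg (g x)) (norm_nonneg (g1 x))),
        mul_nonneg (mul_nonneg hδ.le (hφpos x).le) (sq_nonneg (‖g x‖ - ‖g1 x‖))]
    have h3 : (∫ x : ℝ, δ * (1 / 2 * (φ x * ‖g x‖ ^ 2) + 1 / 2 * (φ x * ‖g1 x‖ ^ 2)))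
        = δ * (1 / 2 * r0 + 1 / 2 * r1) := by
      rw [integral_const_mul, integral_add (hInt0.const_mul _) (hInt1.const_mul _),
        integral_const_mul, integral_const_mul]
    linarith
  have hzb : -(((1 + Complex.I * (α : ℂ)) * B).re) ≤ 1 / 2 * r0 + 1 / 2 * r1 := by
    have h1 : -(((1 + Complex.I * (α : ℂ)) * B).re) ≤ ‖(1 + Complex.I * (α : ℂ)) * B‖ := by
      have := Complex.abs_re_le_norm ((1 + Complex.I * (α : ℂ)) * B)
      cases' abs_le.1 this with hl hr
      linarith
    have h3 : ‖1 + Complex.I * (α : ℂ)‖ ≤ 1 + |α| := by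
      calc ‖1 + Complex.I * (α : ℂ)‖ ≤ ‖(1 : ℂ)‖ + ‖Complex.I * (α : ℂ)‖ := norm_add_le _ _
        _ = 1 + |α| := by rw [norm_one, norm_mul, Complex.norm_I, Complex.norm_real,
              Real.norm_eq_abs, one_mul]
    have hδα : (1 + |α|) * δ ≤ 1 := by
      calc (1 + |α|) * δ ≤ (1 + |α|) * (1 + |α|)⁻¹ :=
            mul_le_mul_of_nonneg_left hδ₀ (by positivity)
        _ = 1 := mul_inv_cancel₀ (by positivity)
    have h4 : ‖(1 + Complex.I * (α : ℂ)) * B‖ ≤ 1 / 2 * r0 + 1 / 2 * r1 := by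
      rw [norm_mul]
      calc ‖1 + Complex.I * (α : ℂ)‖ * ‖B‖ ≤ (1 + |α|) * ‖B‖ :=
            mul_le_mul_of_nonneg_right h3 (norm_nonneg _)
        _ ≤ (1 + |α|) * (δ * (1 / 2 * r0 + 1 / 2 * r1)) :=
            mul_le_mul_of_nonneg_left hBnorm (by positivity)
        _ = ((1 + |α|) * δ) * (1 / 2 * r0 + 1 / 2 * r1) := by ring
        _ ≤ 1 * (1 / 2 * r0 + 1 / 2 * r1) :=
            mul_le_mul_of_nonneg_right hδα (by linarith)
        _ = 1 / 2 * r0 + 1 / 2 * r1 := one_mul _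
    linarith
  rw [hre]
  nlinarith [sq_nonneg α, hr0nn, hzb]
end

section
/- Let q > 1/2 and set θ = arcsin(q/(q+1)) ∈ (0, π/2). Suppose α, β ∈ ℝ satisfy −(1+αβ) < |α−β| · √(2q+1)/q. Then there exist λ ∈ [0,1] and ε ∈ (0,1) such that 2(1−ε)√(λ(1−λ)) + cos θ − |λβ − (1−λ)α| sin θ > 0. -/
/-!
Write `s = sin θ`, `c = cos θ` for `θ = arcsin (q / (q + 1))`, so that `c / s = √(2q+1) / q`.
If `αβ ≥ 0`, some `λ ∈ [0,1]` makes `λβ - (1-λ)α` vanish and `c > 0` wins. If `αβ < 0`, the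
triangle inequality reduces the claim to `λx + (1-λ)y < 2√(λ(1-λ))` with `x = s|β| - c`,
`y = s|α| - c`; with `u = √λ`, `v = √(1-λ)` this asks the quadratic form `x u² - 2uv + y v²` to
be negative somewhere on the positive quarter circle, which happens as soon as its determinant
`xy - 1` is negative. Since `s² + c² = 1`, `xy < 1` is exactly the hypothesis. Finally `ε` is
taken small by continuity.
-/

open Real Set Filter Topology

theorem exists_mem_Icc_mul_add_lt_two_sqrt {x y : ℝ} (h : x * y < 1) :
    ∃ t ∈ Icc (0 : ℝ) 1, t * x + (1 - t) * y < 2 * √(t * (1 - t)) := by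
  set m := (x - y) / 2
  set r := √(1 + m ^ 2)
  have hr : r ^ 2 = 1 + m ^ 2 := sq_sqrt (by positivity)
  have hr0 : 0 < r := by positivity
  have hmr : |m| < r := by
    rw [← abs_of_pos hr0]
    exact sq_lt_sq.1 (by linarith)
  obtain ⟨hm_lo, hm_hi⟩ := abs_lt.1 hmr
  have hmr_lo : -1 < m / r := by rwa [lt_div_iff₀ hr0, neg_one_mul]
  have hmr_hi : m / r < 1 := (div_lt_one hr0).2 hm_hi
  -- `(√t, √(1-t))` is the Perron eigenvector of the form, so that `√(t(1-t)) = 1 / (2r)`.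
  refine ⟨(1 - m / r) / 2, ⟨by linarith, by linarith⟩, ?_⟩
  have hsqrt : √((1 - m / r) / 2 * (1 - (1 - m / r) / 2)) = 1 / (2 * r) := by
    rw [show (1 - m / r) / 2 * (1 - (1 - m / r) / 2) = (1 / (2 * r)) ^ 2 by
      field_simp; linarith]
    exact sqrt_sq (by positivity)
  have hmean : (x + y) / 2 < r := lt_sqrt_of_sq_lt (by simp only [m]; linarith)
  rw [hsqrt]
  calc (1 - m / r) / 2 * x + (1 - (1 - m / r) / 2) * y = (x + y) / 2 - m ^ 2 / r := by
        simp only [m]; field_simp; ring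
    _ < r - m ^ 2 / r := by linarith
    _ = 2 * (1 / (2 * r)) := by field_simp; linarith

theorem exists_mem_Icc_mul_eq_one_sub_mul {α β : ℝ} (h : 0 ≤ α * β) :
    ∃ t ∈ Icc (0 : ℝ) 1, t * β = (1 - t) * α := by
  by_cases hαβ : α + β = 0
  · have hα : α = 0 := by nlinarith
    exact ⟨0, ⟨le_rfl, zero_le_one⟩, by simp [hα]⟩
  have hα : α / (α + β) = α * (α + β) / (α + β) ^ 2 := by field_simp
  have hβ : 1 - α / (α + β) = β * (α + β) / (α + β) ^ 2 := by field_simp; ring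
  refine ⟨α / (α + β), ⟨?_, ?_⟩, ?_⟩
  · rw [hα]; exact div_nonneg (by nlinarith) (sq_nonneg _)
  · rw [← sub_nonneg, hβ]; exact div_nonneg (by nlinarith) (sq_nonneg _)
  · field_simp; ring

theorem exists_mem_Ioo_one_sub_mul_add_pos {a b : ℝ} (h : 0 < a + b) :
    ∃ ε ∈ Ioo (0 : ℝ) 1, 0 < (1 - ε) * a + b := by
  have hcont : Continuous fun ε : ℝ ↦ (1 - ε) * a + b := by fun_prop
  have hlim : Tendsto (fun ε : ℝ ↦ (1 - ε) * a + b) (𝓝[>] 0) (𝓝 (a + b)) :=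
    (hcont.tendsto' 0 _ (by simp)).mono_left nhdsWithin_le_nhds
  exact (Eventually.and (Ioo_mem_nhdsGT one_pos) (hlim.eventually (lt_mem_nhds h))).exists

theorem exists_mem_Icc_abs_mul_sin_lt {θ α β : ℝ} (hθ₀ : 0 < θ) (hθ : θ < π / 2)
    (h : -(1 + α * β) < |α - β| * (cos θ / sin θ)) :
    ∃ t ∈ Icc (0 : ℝ) 1, |t * β - (1 - t) * α| * sin θ < 2 * √(t * (1 - t)) + cos θ := by
  have hsin : 0 < sin θ := sin_pos_of_pos_of_lt_pi hθ₀ (by linarith [pi_pos])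
  have hcos : 0 < cos θ := cos_pos_of_mem_Ioo ⟨by linarith, hθ⟩
  rcases le_or_gt 0 (α * β) with hαβ | hαβ
  · obtain ⟨t, ht, heq⟩ := exists_mem_Icc_mul_eq_one_sub_mul hαβ
    refine ⟨t, ht, ?_⟩
    rw [heq, sub_self, abs_zero, zero_mul]
    positivity
  have hab : |α| * |β| = -(α * β) := by rw [← abs_mul, abs_of_neg hαβ]
  have hdet : (|β| * sin θ - cos θ) * (|α| * sin θ - cos θ) < 1 := by
    have h' : |α| * |β| - 1 < (|α| + |β|) * (cos θ / sin θ) := by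
      have := mul_le_mul_of_nonneg_right (abs_sub α β) (div_pos hcos hsin).le
      rw [hab]
      linarith
    rw [mul_div_assoc', lt_div_iff₀ hsin] at h'
    rw [← sin_sq_add_cos_sq θ]
    nlinarith [mul_lt_mul_of_pos_left h' hsin]
  obtain ⟨t, ⟨ht₀, ht₁⟩, hlt⟩ := exists_mem_Icc_mul_add_lt_two_sqrt hdet
  refine ⟨t, ⟨ht₀, ht₁⟩, ?_⟩
  have htri : |t * β - (1 - t) * α| ≤ t * |β| + (1 - t) * |α| := by
    calc |t * β - (1 - t) * α| ≤ |t * β| + |(1 - t) * α| := abs_sub _ _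
      _ = t * |β| + (1 - t) * |α| := by
        rw [abs_mul, abs_mul, abs_of_nonneg ht₀, abs_of_nonneg (sub_nonneg.2 ht₁)]
  nlinarith [mul_le_mul_of_nonneg_right htri hsin.le]

theorem cos_arcsin_div_add_one {q : ℝ} (hq : 0 ≤ 2 * q + 1) :
    cos (arcsin (q / (q + 1))) = √(2 * q + 1) / (q + 1) := by
  have hq₁ : 0 < q + 1 := by linarith
  rw [cos_arcsin, show 1 - (q / (q + 1)) ^ 2 = (2 * q + 1) / (q + 1) ^ 2 by field_simp; ring,
    sqrt_div hq, sqrt_sq hq₁.le]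

/-- Elementary optimization claim: if `q > 1/2`, `θ = arcsin(q/(q+1))` and
`−(1+αβ) < |α−β|·√(2q+1)/q`, then there exist `λ ∈ [0,1]` and `ε ∈ (0,1)` with
`2(1−ε)√(λ(1−λ)) + cos θ − |λβ − (1−λ)α| sin θ > 0`. -/
theorem cross_term_optimization (q α β : ℝ) (hq : 1 / 2 < q)
    (h : -(1 + α * β) < |α - β| * Real.sqrt (2 * q + 1) / q) :
    ∃ lam : ℝ, lam ∈ Set.Icc (0 : ℝ) 1 ∧ ∃ ε : ℝ, ε ∈ Set.Ioo (0 : ℝ) 1 ∧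
      0 < 2 * (1 - ε) * Real.sqrt (lam * (1 - lam)) +
        Real.cos (Real.arcsin (q / (q + 1))) -
        |lam * β - (1 - lam) * α| * Real.sin (Real.arcsin (q / (q + 1))) := by
  have hq₁ : 0 < q + 1 := by linarith
  set θ := arcsin (q / (q + 1))
  have hsin : sin θ = q / (q + 1) :=
    sin_arcsin (by rw [le_div_iff₀ hq₁]; linarith) (by rw [div_le_one hq₁]; linarith)
  have hcot : cos θ / sin θ = √(2 * q + 1) / q := by
    rw [hsin, cos_arcsin_div_add_one (by linarith)]
    field_simp
  obtain ⟨t, ht, hlt⟩ := exists_mem_Icc_abs_mul_sin_lt (θ := θ) (α := α) (β := β)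
    (arcsin_pos.2 (by positivity)) (arcsin_lt_pi_div_two.2 (by rw [div_lt_one hq₁]; linarith))
    (by rwa [hcot, ← mul_div_assoc])
  obtain ⟨ε, hε, hpos⟩ := exists_mem_Ioo_one_sub_mul_add_pos (a := 2 * √(t * (1 - t)))
    (b := cos θ - |t * β - (1 - t) * α| * sin θ) (by linarith)
  exact ⟨t, ht, ε, hε, by linarith⟩
end

section
/- Let X be a set, ρ a pseudometric on X, and (T_k)_{k ≥ 0} a sequence of maps X → X. Define S_0 = id and S_{k+1} = T_k ∘ S_k, and for n ≥ 1 the Bowen pseudometric d_n(x,y) = max_{0 ≤ k < n} ρ(S_k x, S_k y). Similarly, for the shifted sequence (T_{n+k})_{k ≥ 0} define S'_0 = id, S'_{k+1} = T_{n+k} ∘ S'_k, and d'_m(x,y) = max_{0 ≤ k < m} ρ(S'_k x, S'_k y). Then for every A ⊆ X, every ε > 0 and all n, m ≥ 1: if A can be covered by N sets each of d_n-diameter at most ε, and the image S_n(A) can be covered by M sets each of d'_m-diameter at most ε, then A can be covered by at most N · M sets each of d_{n+m}-diameter at most ε. -/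
/-- `ρ` is a pseudometric on `X`. -/
def IsPseudometric {X : Type*} (d : X → X → ℝ) : Prop :=
  (∀ x, d x x = 0) ∧ (∀ x y, d x y = d y x) ∧ (∀ x y, 0 ≤ d x y) ∧
    (∀ x y z, d x z ≤ d x y + d y z)

/-- The compositions `S_0 = id`, `S_{k+1} = T_k ∘ S_k` of a sequence of maps. -/
def Sseq {X : Type*} (T : ℕ → X → X) : ℕ → X → X
  | 0 => id
  | k + 1 => T k ∘ Sseq T k

/-- The nonautonomous Bowen pseudometric
`d_n(x,y) = max_{0 ≤ k < n} ρ(S_k x, S_k y)` (for `n ≥ 1`). -/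
noncomputable def bowen {X : Type*} (ρ : X → X → ℝ) (T : ℕ → X → X) (n : ℕ)
    (x y : X) : ℝ :=
  ⨆ k : Fin n, ρ (Sseq T (k : ℕ) x) (Sseq T (k : ℕ) y)

lemma Sseq_add {X : Type*} (T : ℕ → X → X) (n k : ℕ) (x : X) :
    Sseq T (n + k) x = Sseq (fun j => T (n + j)) k (Sseq T n x) := by
  induction k with
  | zero => rfl
  | succ k ih => simp [Sseq, ih]

lemma le_bowen {X : Type*} (ρ : X → X → ℝ) (T : ℕ → X → X) (n : ℕ) (k : Fin n)
    (x y : X) : ρ (Sseq T (k : ℕ) x) (Sseq T (k : ℕ) y) ≤ bowen ρ T n x y :=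
  le_ciSup (f := fun k : Fin n => ρ (Sseq T (k : ℕ) x) (Sseq T (k : ℕ) y))
    (Set.Finite.bddAbove (Set.finite_range _)) k

/-- Time-subadditivity of covering numbers for nonautonomous Bowen metrics: if `A` has a
cover by `N` sets of `d_n`-diameter `≤ ε` and `S_n(A)` has a cover by `M` sets of
`d'_m`-diameter `≤ ε` (for the shifted sequence `(T_{n+k})_k`), then `A` has a cover by
`N·M` sets of `d_{n+m}`-diameter `≤ ε`. -/
theorem bowen_cover_subadditive {X : Type*} (ρ : X → X → ℝ) (hρ : IsPseudometric ρ)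
    (T : ℕ → X → X) (A : Set X) (ε : ℝ) (hε : 0 < ε)
    (n m : ℕ) (hn : 1 ≤ n) (hm : 1 ≤ m) (N M : ℕ)
    (hU : ∃ U : Fin N → Set X, A ⊆ ⋃ i, U i ∧
      ∀ i, ∀ x ∈ U i, ∀ y ∈ U i, bowen ρ T n x y ≤ ε)
    (hV : ∃ V : Fin M → Set X, (Sseq T n '' A) ⊆ ⋃ i, V i ∧
      ∀ i, ∀ x ∈ V i, ∀ y ∈ V i, bowen ρ (fun k => T (n + k)) m x y ≤ ε) :
    ∃ W : Fin (N * M) → Set X, A ⊆ ⋃ i, W i ∧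
      ∀ i, ∀ x ∈ W i, ∀ y ∈ W i, bowen ρ T (n + m) x y ≤ ε := by
  obtain ⟨U, hUcov, hUdiam⟩ := hU
  obtain ⟨V, hVcov, hVdiam⟩ := hV
  refine ⟨fun p => U (finProdFinEquiv.symm p).1 ∩ (Sseq T n) ⁻¹' V (finProdFinEquiv.symm p).2,
    ?_, ?_⟩
  · intro x hx
    obtain ⟨_, ⟨i, rfl⟩, hi⟩ := hUcov hx
    obtain ⟨_, ⟨j, rfl⟩, hj⟩ := hVcov ⟨x, hx, rfl⟩
    exact Set.mem_iUnion.2 ⟨finProdFinEquiv (i, j), by simpa using ⟨hi, hj⟩⟩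
  · intro p x hx y hy
    have : Nonempty (Fin (n + m)) := ⟨⟨0, by omega⟩⟩
    apply ciSup_le
    intro ⟨k, hk⟩
    rcases lt_or_ge k n with h | h
    · exact le_trans (le_bowen ρ T n ⟨k, h⟩ x y) (hUdiam _ _ hx.1 _ hy.1)
    · obtain ⟨k', rfl⟩ := Nat.exists_eq_add_of_le h
      simp only [Sseq_add]
      have hk' : k' < m := by omega
      exact le_trans (le_bowen ρ (fun j => T (n + j)) m ⟨k', hk'⟩ _ _)
        (hVdiam _ _ hx.2 _ hy.2)
end
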